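/- arXiv:1207.6734 — 3 statements merged into one kernel-verified Lean document; each statement's English description precedes it below -/
import Mathlib

section
/- Divergence degree bound: for any connected subgraph H of a rank-4 U(1) TGFT graph, the Abelian divergence degree ω(H) = −2L(H) + F(H) − r(H) satisfies ω(H) ≤ D₅ + D₄/2 − D₂/2 − Σ_{k≥3}(k/2 − 1)F_k − Σ_{k≥1}(k/2)F_{ext,k}. -/
open Finset
open scoped Classical

noncomputable section

/-- Support of an internal face: the lines it is incident to (`ε_{ef} ≠ 0`). -/
def faceSupp (Line Face : Type) [Fintype Line] (incid : Face → Line → ℤ) (f : Face) :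
    Finset Line :=
  univ.filter fun e => incid f e ≠ 0

/-- Number of `p`-dipole lines: lines carrying exactly `p - 1` internal faces of length
one. -/
def nDipoles (Line Face : Type) [Fintype Line] [Fintype Face]
    (incid : Face → Line → ℤ) (p : ℕ) : ℕ :=
  (univ.filter fun e : Line =>
      (univ.filter fun f : Face =>
          incid f e ≠ 0 ∧ (faceSupp Line Face incid f).card = 1).card = p - 1).card

/-- Rank of the line–(internal-)face incidence matrix `ε_{ef}` (over ℚ). -/
def epsRank (Line Face : Type) [Fintype Line] [Fintype Face]
    (incid : Face → Line → ℤ) : ℕ :=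
  Matrix.rank (Matrix.of fun (f : Face) (e : Line) => (incid f e : ℚ))

lemma card_le_rank_of_singletons {Line Face : Type} [Fintype Line] [Fintype Face]
    [DecidableEq Line] (M : Matrix Face Line ℚ) (S : Finset Line) (φ : Line → Face)
    (h : ∀ e ∈ S, M (φ e) e ≠ 0 ∧ ∀ e', e' ≠ e → M (φ e) e' = 0) :
    S.card ≤ M.rank := by
  classical
  set π : (Face → ℚ) →ₗ[ℚ] (↥S → ℚ) := LinearMap.funLeft ℚ ℚ (fun x : ↥S => φ x) with hπ
  set T : (Line → ℚ) →ₗ[ℚ] (↥S → ℚ) := π.comp M.mulVecLin with hT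
  have hsurj : Function.Surjective T := by
    intro w
    refine ⟨fun e => if he : e ∈ S then (M (φ e) e)⁻¹ * w ⟨e, he⟩ else 0, ?_⟩
    funext x
    show ∑ e, M (φ (x : Line)) e *
        (if he : e ∈ S then (M (φ e) e)⁻¹ * w ⟨e, he⟩ else 0) = w x
    rw [Finset.sum_eq_single (x : Line)]
    · rw [dif_pos x.2, ← mul_assoc, mul_inv_cancel₀ (h x x.2).1, one_mul]
    · intro e' _ hne
      rw [(h x x.2).2 e' hne, zero_mul]
    · intro hx; exact absurd (mem_univ _) hx
  have h1 : S.card = Module.finrank ℚ (LinearMap.range T) := by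
    rw [LinearMap.range_eq_top.mpr hsurj, finrank_top,
      Module.finrank_fintype_fun_eq_card, Fintype.card_coe]
  have h2 : LinearMap.range T = Submodule.map π (LinearMap.range M.mulVecLin) :=
    LinearMap.range_comp _ _
  have h3 : Module.finrank ℚ (Submodule.map π (LinearMap.range M.mulVecLin)) ≤
      Module.finrank ℚ (LinearMap.range M.mulVecLin) :=
    Submodule.finrank_map_le _ _
  rw [h1, h2]
  exact h3.trans_eq rfl

lemma sum_fiber_card {X : Type} [Fintype X] (c : X → ℕ) (n : ℕ) (h : ∀ x, c x ≤ n) :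
    Fintype.card X = ∑ k ∈ Finset.range (n+1), (univ.filter fun x => c x = k).card := by
  classical
  rw [← Finset.card_univ]
  exact Finset.card_eq_sum_card_fiberwise
    (fun x _ => Finset.mem_range.mpr (Nat.lt_succ_of_le (h x)))

lemma sum_fiber_weighted {X : Type} [Fintype X] (c : X → ℕ) (n : ℕ) (h : ∀ x, c x ≤ n) :
    ∑ x, c x = ∑ k ∈ Finset.range (n+1), k * (univ.filter fun x => c x = k).card := by
  classical
  rw [← Finset.sum_fiberwise_of_maps_to
    (fun x _ => Finset.mem_range.mpr (Nat.lt_succ_of_le (h x))) c]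
  refine Finset.sum_congr rfl fun k _ => ?_
  rw [Finset.sum_congr rfl fun x hx => (Finset.mem_filter.mp hx).2,
    Finset.sum_const, smul_eq_mul, mul_comm]

lemma double_count {X Y : Type} [Fintype X] [Fintype Y] (P : X → Y → Prop)
    [∀ x y, Decidable (P x y)] :
    ∑ y, (univ.filter fun x => P x y).card = ∑ x, (univ.filter fun y => P x y).card := by
  simp only [Finset.card_filter]
  exact Finset.sum_comm

/-- **Divergence degree bound.**  For a connected subgraph `H` of a rank-4 U(1) TGFT
graph, the Abelian divergence degree `ω(H) = -2L + F - r` satisfies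
`ω ≤ D₅ + D₄/2 - D₂/2 - Σ_{k≥3} (k/2 - 1) F_k - Σ_{k≥1} (k/2) F_{ext,k}`. -/
theorem divergence_degree_bound
    (Line Face ExtFace : Type) [Fintype Line] [DecidableEq Line]
    [Fintype Face] [Fintype ExtFace]
    (incid : Face → Line → ℤ) (onExt : ExtFace → Finset Line)
    (hsign : ∀ f e, incid f e = -1 ∨ incid f e = 0 ∨ incid f e = 1)
    (hfaces_nonempty : ∀ f : Face, (faceSupp Line Face incid f).Nonempty)
    (hfour : ∀ e : Line,
        (univ.filter fun f : Face => incid f e ≠ 0).card +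
          (univ.filter fun g : ExtFace => e ∈ onExt g).card = 4)
    (hconn : ∀ e e' : Line,
        Relation.EqvGen (fun x y => ∃ f : Face, incid f x ≠ 0 ∧ incid f y ≠ 0) e e') :
    (-2 : ℚ) * Fintype.card Line + Fintype.card Face - epsRank Line Face incid ≤
      (nDipoles Line Face incid 5 : ℚ) + (nDipoles Line Face incid 4 : ℚ) / 2
        - (nDipoles Line Face incid 2 : ℚ) / 2
        - (∑ k ∈ Finset.range (Fintype.card Line + 1),
            (if 3 ≤ k then ((k : ℚ) / 2 - 1) else 0) *
              ((univ.filter fun f : Face =>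
                  (faceSupp Line Face incid f).card = k).card : ℚ))
        - (∑ k ∈ Finset.range (Fintype.card Line + 1),
            ((k : ℚ) / 2) *
              ((univ.filter fun g : ExtFace => (onExt g).card = k).card : ℚ)) := by
  classical
  set n1 : Line → ℕ := fun e =>
    (univ.filter fun f : Face =>
      incid f e ≠ 0 ∧ (faceSupp Line Face incid f).card = 1).card with hn1
  have hDip : ∀ p : ℕ, nDipoles Line Face incid p =
      (univ.filter fun e : Line => n1 e = p - 1).card := by
    intro p
    simp only [nDipoles, hn1]
  have hcF : ∀ f : Face, (faceSupp Line Face incid f).card ≤ Fintype.card Line :=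
    fun f => Finset.card_le_univ _
  -- (1) face count by length
  have h1 : Fintype.card Face = ∑ k ∈ Finset.range (Fintype.card Line + 1),
      (univ.filter fun f : Face => (faceSupp Line Face incid f).card = k).card :=
    sum_fiber_card _ _ hcF
  -- (2) 4L identity
  have hdc1 : ∑ e : Line, (univ.filter fun f : Face => incid f e ≠ 0).card
      = ∑ f : Face, (faceSupp Line Face incid f).card := by
    rw [double_count fun f e => incid f e ≠ 0]
    rfl
  have hdc2 : ∑ e : Line, (univ.filter fun g : ExtFace => e ∈ onExt g).card
      = ∑ g : ExtFace, (onExt g).card := by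
    rw [double_count fun g e => e ∈ onExt g]
    exact Finset.sum_congr rfl fun g _ => congrArg Finset.card (Finset.filter_univ_mem _)
  have h2 : 4 * Fintype.card Line =
      (∑ k ∈ Finset.range (Fintype.card Line + 1),
        k * (univ.filter fun f : Face => (faceSupp Line Face incid f).card = k).card)
      + (∑ k ∈ Finset.range (Fintype.card Line + 1),
        k * (univ.filter fun g : ExtFace => (onExt g).card = k).card) := by
    rw [← sum_fiber_weighted _ _ hcF,
      ← sum_fiber_weighted (fun g : ExtFace => (onExt g).card) _
        (fun g => Finset.card_le_univ _),
      ← hdc1, ← hdc2, ← Finset.sum_add_distrib]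
    simp [hfour, Finset.sum_const, Finset.card_univ, mul_comm]
  -- n1 bound
  have hn1le : ∀ e, n1 e ≤ 4 := by
    intro e
    have hsub : (univ.filter fun f : Face =>
        incid f e ≠ 0 ∧ (faceSupp Line Face incid f).card = 1) ⊆
        (univ.filter fun f : Face => incid f e ≠ 0) := fun f hf =>
      mem_filter.mpr ⟨mem_univ f, (mem_filter.mp hf).2.1⟩
    have h4 := hfour e
    have := Finset.card_le_card hsub
    simp only [hn1]
    omega
  -- (3) F1 = sum of n1
  have hF1count : (univ.filter fun f : Face =>
      (faceSupp Line Face incid f).card = 1).card = ∑ e : Line, n1 e := by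
    rw [hn1]
    rw [double_count fun f e => incid f e ≠ 0 ∧ (faceSupp Line Face incid f).card = 1]
    have hterm : ∀ f : Face, (univ.filter fun e : Line =>
        incid f e ≠ 0 ∧ (faceSupp Line Face incid f).card = 1).card
        = if (faceSupp Line Face incid f).card = 1 then 1 else 0 := by
      intro f
      by_cases h : (faceSupp Line Face incid f).card = 1
      · rw [if_pos h]
        have hset : (univ.filter fun e : Line =>
            incid f e ≠ 0 ∧ (faceSupp Line Face incid f).card = 1)
            = faceSupp Line Face incid f := by
          show _ = univ.filter fun e : Line => incid f e ≠ 0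
          exact Finset.filter_congr fun e _ => by simp [h]
        rw [hset, h]
      · rw [if_neg h, Finset.card_eq_zero, Finset.filter_eq_empty_iff]
        intro e _
        simp [h]
    rw [Finset.sum_congr rfl fun f _ => hterm f, ← Finset.card_filter]
  have hsum_n1 : ∑ e : Line, n1 e = ∑ j ∈ Finset.range 5,
      j * (univ.filter fun e : Line => n1 e = j).card :=
    sum_fiber_weighted n1 4 hn1le
  have e3 : (univ.filter fun f : Face => (faceSupp Line Face incid f).card = 1).card
      = nDipoles Line Face incid 2 + 2 * nDipoles Line Face incid 3
        + 3 * nDipoles Line Face incid 4 + 4 * nDipoles Line Face incid 5 := by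
    rw [hF1count, hsum_n1, hDip 2, hDip 3, hDip 4, hDip 5]
    norm_num [Finset.sum_range_succ]
  -- (4) rank bound
  have hfe : ∀ j : ℕ, j ≠ 0 →
      ((univ.filter fun e : Line => n1 e ≠ 0).filter fun e => n1 e = j)
        = univ.filter fun e : Line => n1 e = j := by
    intro j hj
    ext e
    simp only [mem_filter, mem_univ, true_and]
    exact ⟨fun h => h.2, fun h => ⟨h ▸ hj, h⟩⟩
  have h0 : ((univ.filter fun e : Line => n1 e ≠ 0).filter fun e => n1 e = 0) = ∅ := by
    ext e
    simp only [mem_filter, mem_univ, true_and, Finset.notMem_empty, iff_false]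
    tauto
  have hScard : (univ.filter fun e : Line => n1 e ≠ 0).card
      = nDipoles Line Face incid 2 + nDipoles Line Face incid 3
        + nDipoles Line Face incid 4 + nDipoles Line Face incid 5 := by
    have := Finset.card_eq_sum_card_fiberwise
      (f := n1) (s := univ.filter fun e : Line => n1 e ≠ 0) (t := Finset.range 5)
      (fun e _ => Finset.mem_range.mpr (lt_of_le_of_lt (hn1le e) (by norm_num)))
    rw [this, hDip 2, hDip 3, hDip 4, hDip 5]
    rw [Finset.sum_range_succ, Finset.sum_range_succ, Finset.sum_range_succ,
      Finset.sum_range_succ, Finset.sum_range_one, h0,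
      hfe 1 one_ne_zero, hfe 2 (by norm_num), hfe 3 (by norm_num), hfe 4 (by norm_num)]
    norm_num
  have h4 : nDipoles Line Face incid 2 + nDipoles Line Face incid 3
      + nDipoles Line Face incid 4 + nDipoles Line Face incid 5
      ≤ epsRank Line Face incid := by
    rw [← hScard]
    rcases isEmpty_or_nonempty Face with hF | hF
    · have hz : ∀ e : Line, n1 e = 0 := by
        intro e; simp only [hn1]; simp [Finset.univ_eq_empty]
      simp [hz]
    · have : Inhabited Face := Classical.inhabited_of_nonempty hF
      have hex : ∀ e : Line, n1 e ≠ 0 →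
          ∃ f : Face, incid f e ≠ 0 ∧ faceSupp Line Face incid f = {e} := by
        intro e he
        have hpos : 0 < (univ.filter fun f : Face =>
            incid f e ≠ 0 ∧ (faceSupp Line Face incid f).card = 1).card := by
          simp only [hn1] at he; omega
        obtain ⟨f, hf⟩ := Finset.card_pos.mp hpos
        rw [mem_filter] at hf
        refine ⟨f, hf.2.1, ?_⟩
        have he' : e ∈ faceSupp Line Face incid f := by
          simp [faceSupp, hf.2.1]
        obtain ⟨a, ha⟩ := Finset.card_eq_one.mp hf.2.2
        rw [ha] at he' ⊢
        rw [Finset.mem_singleton] at he'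
        rw [he']
      choose! φ hφ using hex
      refine card_le_rank_of_singletons
        (Matrix.of fun (f : Face) (e : Line) => ((incid f e : ℚ)))
        (univ.filter fun e : Line => n1 e ≠ 0) φ ?_
      intro e he
      rw [mem_filter] at he
      obtain ⟨hne, hsupp⟩ := hφ e he.2
      constructor
      · simpa using hne
      · intro e' hne'
        have : e' ∉ faceSupp Line Face incid (φ e) := by
          rw [hsupp, Finset.mem_singleton]; exact hne'
        simp only [faceSupp, mem_filter, mem_univ, true_and, not_not] at this
        simpa using this
  -- F0 = 0 and F1 = 0 when no lines
  have hF0 : (univ.filter fun f : Face => (faceSupp Line Face incid f).card = 0).card = 0 := by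
    rw [Finset.card_eq_zero, Finset.filter_eq_empty_iff]
    intro f _
    exact fun h => (hfaces_nonempty f).ne_empty (Finset.card_eq_zero.mp h)
  have hF1z : Fintype.card Line = 0 →
      (univ.filter fun f : Face => (faceSupp Line Face incid f).card = 1).card = 0 := by
    intro hL
    rw [Finset.card_eq_zero, Finset.filter_eq_empty_iff]
    intro f _ hc
    have := hcF f
    omega
  -- arithmetic identities for the two goal sums
  have hA : (∑ k ∈ Finset.range (Fintype.card Line + 1),
        (if 3 ≤ k then ((k : ℚ) / 2 - 1) else 0) *
          ((univ.filter fun f : Face => (faceSupp Line Face incid f).card = k).card : ℚ))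
      = (∑ k ∈ Finset.range (Fintype.card Line + 1),
          (k : ℚ) * ((univ.filter fun f : Face =>
            (faceSupp Line Face incid f).card = k).card : ℚ)) / 2
        - (∑ k ∈ Finset.range (Fintype.card Line + 1),
            ((univ.filter fun f : Face =>
              (faceSupp Line Face incid f).card = k).card : ℚ))
        + ((univ.filter fun f : Face =>
            (faceSupp Line Face incid f).card = 1).card : ℚ) / 2 := by
    have hterm : ∀ k ∈ Finset.range (Fintype.card Line + 1),
        (if 3 ≤ k then ((k : ℚ) / 2 - 1) else 0) *
          ((univ.filter fun f : Face => (faceSupp Line Face incid f).card = k).card : ℚ)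
        = ((k : ℚ) * ((univ.filter fun f : Face =>
              (faceSupp Line Face incid f).card = k).card : ℚ)) / 2
          - ((univ.filter fun f : Face =>
              (faceSupp Line Face incid f).card = k).card : ℚ)
          + (if k = 1 then ((univ.filter fun f : Face =>
              (faceSupp Line Face incid f).card = k).card : ℚ) / 2 else 0)
          + (if k = 0 then ((univ.filter fun f : Face =>
              (faceSupp Line Face incid f).card = k).card : ℚ) else 0) := by
      intro k _
      rcases k with _ | _ | _ | k
      · norm_num
      · norm_num
        ring
      · norm_num
      · have h3 : 3 ≤ k + 3 := by omega
        rw [if_pos h3, if_neg (by omega), if_neg (by omega)]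
        push_cast
        ring
    rw [Finset.sum_congr rfl hterm, Finset.sum_add_distrib, Finset.sum_add_distrib,
      Finset.sum_sub_distrib, ← Finset.sum_div,
      Finset.sum_ite_eq' (Finset.range (Fintype.card Line + 1)) 1,
      Finset.sum_ite_eq' (Finset.range (Fintype.card Line + 1)) 0]
    rw [if_pos (show (0:ℕ) ∈ Finset.range (Fintype.card Line + 1) from
      Finset.mem_range.mpr (Nat.succ_pos _))]
    rw [hF0]
    by_cases hL : Fintype.card Line = 0
    · rw [if_neg (show (1:ℕ) ∉ Finset.range (Fintype.card Line + 1) by simp [hL]),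
        hF1z hL]
      norm_num
    · rw [if_pos (show (1:ℕ) ∈ Finset.range (Fintype.card Line + 1) from
        Finset.mem_range.mpr (by omega))]
      push_cast
      ring
  have hB : (∑ k ∈ Finset.range (Fintype.card Line + 1),
        ((k : ℚ) / 2) * ((univ.filter fun g : ExtFace => (onExt g).card = k).card : ℚ))
      = (∑ k ∈ Finset.range (Fintype.card Line + 1),
          (k : ℚ) * ((univ.filter fun g : ExtFace =>
            (onExt g).card = k).card : ℚ)) / 2 := by
    rw [Finset.sum_div]
    exact Finset.sum_congr rfl fun k _ => by ring
  -- combine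
  have h1q : (Fintype.card Face : ℚ) = ∑ k ∈ Finset.range (Fintype.card Line + 1),
      ((univ.filter fun f : Face => (faceSupp Line Face incid f).card = k).card : ℚ) := by
    exact_mod_cast congrArg (Nat.cast : ℕ → ℚ) h1
  have h2q : 4 * (Fintype.card Line : ℚ) =
      (∑ k ∈ Finset.range (Fintype.card Line + 1),
        (k : ℚ) * ((univ.filter fun f : Face =>
          (faceSupp Line Face incid f).card = k).card : ℚ))
      + (∑ k ∈ Finset.range (Fintype.card Line + 1),
        (k : ℚ) * ((univ.filter fun g : ExtFace =>
          (onExt g).card = k).card : ℚ)) := by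
    have := congrArg (Nat.cast : ℕ → ℚ) h2
    push_cast at this
    exact this
  have e3q : ((univ.filter fun f : Face =>
        (faceSupp Line Face incid f).card = 1).card : ℚ)
      = (nDipoles Line Face incid 2 : ℚ) + 2 * nDipoles Line Face incid 3
        + 3 * nDipoles Line Face incid 4 + 4 * nDipoles Line Face incid 5 := by
    have := congrArg (Nat.cast : ℕ → ℚ) e3
    push_cast at this
    exact this
  have h4q : (nDipoles Line Face incid 2 : ℚ) + nDipoles Line Face incid 3
      + nDipoles Line Face incid 4 + nDipoles Line Face incid 5
      ≤ (epsRank Line Face incid : ℚ) := by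
    exact_mod_cast h4
  linarith [hA, hB, h1q, h2q, e3q, h4q]

end
end

section
/- Invariance of the divergence degree under 4-dipole contraction: if H is a connected subgraph of a rank-4 U(1) TGFT graph and l is a 4-dipole line of H, then ω(H) = ω(H/l), where ω = −2L + F − r. -/
open Finset
open scoped Classical

noncomputable section

/-- The Abelian (U(1), D = 1) divergence degree `ω = -2L + F - r`. -/
def omegaDeg (Line Face : Type) [Fintype Line] [Fintype Face]
    (incid : Face → Line → ℤ) : ℚ :=
  -2 * (Fintype.card Line : ℚ) + (Fintype.card Face : ℚ) -
    (epsRank Line Face incid : ℚ)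

set_option synthInstance.maxHeartbeats 1000000 in
set_option maxHeartbeats 1000000 in
theorem epsRank_contract (Line Face : Type) [Fintype Line] [DecidableEq Line] [Fintype Face]
    (incid : Face → Line → ℤ) (l : Line)
    (hex : ∃ f : Face, faceSupp Line Face incid f = {l}) :
    epsRank Line Face incid =
      epsRank {e : Line // e ≠ l} {f : Face // faceSupp Line Face incid f ≠ {l}}
        (fun f e => incid f.1 e.1) + 1 := by
  classical
  set row : Face → (Line → ℚ) := fun f e => (incid f e : ℚ) with hrow
  set row' : {f : Face // faceSupp Line Face incid f ≠ {l}} → ({e : Line // e ≠ l} → ℚ) :=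
    fun f e => (incid f.1 e.1 : ℚ) with hrow'
  set π : (Line → ℚ) →ₗ[ℚ] ({e : Line // e ≠ l} → ℚ) :=
    LinearMap.funLeft ℚ ℚ Subtype.val with hπ
  set W : Submodule ℚ (Line → ℚ) := Submodule.span ℚ (Set.range row) with hW
  set sl : Line → ℚ := Pi.single l 1 with hsl
  obtain ⟨f0, hf0⟩ := hex
  have hf0l : incid f0 l ≠ 0 := by
    have : l ∈ faceSupp Line Face incid f0 := by rw [hf0]; exact Finset.mem_singleton_self l
    simpa [faceSupp] using this
  have hsupp0 : ∀ f : Face, faceSupp Line Face incid f = {l} → ∀ e, e ≠ l → incid f e = 0 := by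
    intro f hf e he
    by_contra h
    have : e ∈ faceSupp Line Face incid f := by simp [faceSupp, h]
    rw [hf, Finset.mem_singleton] at this
    exact he this
  have hc : (incid f0 l : ℚ) ≠ 0 := Int.cast_ne_zero.mpr hf0l
  have hrowf0 : row f0 = (incid f0 l : ℚ) • sl := by
    funext e
    by_cases he : e = l
    · subst he; simp [hrow, hsl]
    · simp [hrow, hsl, hsupp0 f0 hf0 e he, Pi.single_eq_of_ne he]
  have hsingle : sl ∈ W := by
    have hmem : row f0 ∈ W := Submodule.subset_span ⟨f0, rfl⟩
    have : (incid f0 l : ℚ)⁻¹ • row f0 = sl := by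
      rw [hrowf0, smul_smul, inv_mul_cancel₀ hc, one_smul]
    exact this ▸ W.smul_mem _ hmem
  have hπsl : π sl = 0 := by
    ext ⟨e, he⟩
    simp [hπ, LinearMap.funLeft_apply, hsl, Pi.single_eq_of_ne he]
  have hker : LinearMap.ker π = Submodule.span ℚ {sl} := by
    ext v
    rw [LinearMap.mem_ker, Submodule.mem_span_singleton]
    constructor
    · intro hv
      refine ⟨v l, ?_⟩
      funext e
      by_cases he : e = l
      · subst he; simp [hsl]
      · have : π v ⟨e, he⟩ = 0 := by rw [hv]; rfl
        have hve : v e = 0 := this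
        simp [hsl, Pi.single_eq_of_ne he, hve]
    · rintro ⟨a, rfl⟩
      rw [map_smul, hπsl, smul_zero]
  have hkerW : LinearMap.ker π ≤ W := by
    rw [hker]
    exact (Submodule.span_singleton_le_iff_mem _ _).mpr hsingle
  have hslne : sl ≠ 0 := by
    intro h
    have := congrFun h l
    simp [hsl] at this
  have hkerrank : Module.finrank ℚ (LinearMap.ker π) = 1 := by
    rw [hker]; exact finrank_span_singleton hslne
  -- image
  have hπrow : ∀ f : Face, (hf : faceSupp Line Face incid f ≠ {l}) → π (row f) = row' ⟨f, hf⟩ := by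
    intro f hf; rfl
  have hπrow0 : ∀ f : Face, faceSupp Line Face incid f = {l} → π (row f) = 0 := by
    intro f hf
    ext ⟨e, he⟩
    simp [hπ, LinearMap.funLeft_apply, hrow, hsupp0 f hf e he]
  have hmap : W.map π = Submodule.span ℚ (Set.range row') := by
    rw [hW, Submodule.map_span]
    apply le_antisymm
    · rw [Submodule.span_le]
      rintro _ ⟨_, ⟨f, rfl⟩, rfl⟩
      by_cases hf : faceSupp Line Face incid f = {l}
      · rw [hπrow0 f hf]; exact Submodule.zero_mem _
      · rw [hπrow f hf]; exact Submodule.subset_span ⟨⟨f, hf⟩, rfl⟩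
    · rw [Submodule.span_le]
      rintro _ ⟨⟨f, hf⟩, rfl⟩
      exact Submodule.subset_span ⟨row f, ⟨f, rfl⟩, (hπrow f hf).symm⟩
  -- rank-nullity on π restricted to W
  have hφ : Module.finrank ℚ (W.map π) + 1 = Module.finrank ℚ W := by
    set φ : W →ₗ[ℚ] ({e : Line // e ≠ l} → ℚ) := π.comp W.subtype with hφdef
    have hr : LinearMap.range φ = W.map π := by
      rw [hφdef, LinearMap.range_comp, Submodule.range_subtype]
    have hk : LinearMap.ker φ = Submodule.comap W.subtype (LinearMap.ker π) := by
      rw [hφdef, LinearMap.ker_comp]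
    have hkeq : Module.finrank ℚ (LinearMap.ker φ) = 1 := by
      rw [hk]
      rw [LinearEquiv.finrank_eq (Submodule.comapSubtypeEquivOfLe hkerW)]
      exact hkerrank
    have := LinearMap.finrank_range_add_finrank_ker φ
    rw [hr, hkeq] at this
    exact this
  -- conclude
  have h1 : epsRank Line Face incid = Module.finrank ℚ W := by
    rw [epsRank, Matrix.rank_eq_finrank_span_row]
    rfl
  have h2 : epsRank {e : Line // e ≠ l} {f : Face // faceSupp Line Face incid f ≠ {l}}
      (fun f e => incid f.1 e.1) = Module.finrank ℚ (W.map π) := by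
    rw [epsRank, Matrix.rank_eq_finrank_span_row, hmap]
    rfl
  rw [h1, h2, hφ]

/-- **Invariance of the divergence degree under 4-dipole contraction.**  If `l` is a
4-dipole line of a connected rank-4 subgraph `H` (so `l` carries exactly three internal
faces of length one), then `ω(H) = ω(H/l)`: contracting `l` removes one line, deletes its
three internal faces, and drops the rank of the incidence matrix by exactly one. -/
theorem omega_invariant_under_4dipole_contraction
    (Line Face : Type) [Fintype Line] [DecidableEq Line] [Fintype Face]
    (incid : Face → Line → ℤ)
    (hsign : ∀ f e, incid f e = -1 ∨ incid f e = 0 ∨ incid f e = 1)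
    (hrank4 : ∀ e : Line, (univ.filter fun f : Face => incid f e ≠ 0).card ≤ 4)
    (hconn : ∀ e e' : Line,
        Relation.EqvGen (fun x y => ∃ f : Face, incid f x ≠ 0 ∧ incid f y ≠ 0) e e')
    (l : Line)
    (hdip : (univ.filter fun f : Face => faceSupp Line Face incid f = {l}).card = 3) :
    omegaDeg Line Face incid =
      omegaDeg {e : Line // e ≠ l} {f : Face // faceSupp Line Face incid f ≠ {l}}
        (fun f e => incid f.1 e.1) := by

  classical
  have hex : ∃ f : Face, faceSupp Line Face incid f = {l} := by
    have : 0 < (univ.filter fun f : Face => faceSupp Line Face incid f = {l}).card := by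
      rw [hdip]; norm_num
    obtain ⟨f, hf⟩ := Finset.card_pos.mp this
    exact ⟨f, (Finset.mem_filter.mp hf).2⟩
  have hrank := epsRank_contract Line Face incid l hex
  have hLpos : 1 ≤ Fintype.card Line := Fintype.card_pos_iff.mpr ⟨l⟩
  have hL : Fintype.card {e : Line // e ≠ l} = Fintype.card Line - 1 := by
    have := Fintype.card_subtype_compl (fun e : Line => e = l)
    simpa [Fintype.card_subtype_eq] using this
  have hFcard : Fintype.card {f : Face // faceSupp Line Face incid f = {l}} = 3 := by
    rw [Fintype.card_subtype]; exact hdip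
  have hF3 : 3 ≤ Fintype.card Face := by
    rw [← hdip]; exact Finset.card_filter_le _ _
  have hF : Fintype.card {f : Face // faceSupp Line Face incid f ≠ {l}} =
      Fintype.card Face - 3 := by
    rw [Fintype.card_subtype_compl, hFcard]
  have hLQ : (Fintype.card {e : Line // e ≠ l} : ℚ) = (Fintype.card Line : ℚ) - 1 := by
    rw [hL, Nat.cast_sub hLpos]; norm_num
  have hFQ : (Fintype.card {f : Face // faceSupp Line Face incid f ≠ {l}} : ℚ) =
      (Fintype.card Face : ℚ) - 3 := by
    rw [hF, Nat.cast_sub hF3]; norm_num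
  rw [omegaDeg, omegaDeg, hrank, hLQ, hFQ]
  push_cast
  ring


end
end

section
/- In the φ⁶ example: the connected rank-4 bubble invariant S of order 6 admits a unique closure into a vacuum graph with a single vertex such that every meloforest of S is a meloforest of that graph; this graph has three lines l₁,l₂,l₃ and exactly four nonempty strict melopoles {l₁}, {l₃}, {l₁,l₂}, {l₂,l₃}, while {l₂} and {l₁,l₃} are not melopoles; consequently S has exactly 16 meloforests. -/
open Finset
open scoped Classical

noncomputable section

/-! Basic formal model of TGFT Feynman graphs: a rank-`d` TGFT graph is encoded through
its colored extension, a `(d+1)`-edge-colored graph.  Nodes are elements of `V`; for each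
color `c : Fin (d+1)` the partial matching `edge c` pairs nodes (color `0` lines are the
propagator lines, colors `1,…,d` are the internal colored lines of the bubbles). -/
structure PreGraph (d : ℕ) (V : Type) where
  verts : Finset V
  edge : Fin (d + 1) → V → Option V

variable {d : ℕ} {V : Type}

/-- The axioms making the data a genuine `(d+1)`-colored graph: each `edge c` is a
symmetric fixed-point-free partial matching supported on the vertices, which is total
(a perfect matching) for every color `c ≠ 0`. -/
def isColored (G : PreGraph d V) : Prop :=
  (∀ c a b, G.edge c a = some b → G.edge c b = some a) ∧
  (∀ c a b, G.edge c a = some b → a ∈ G.verts ∧ b ∈ G.verts) ∧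
  (∀ c a, G.edge c a ≠ some a) ∧
  (∀ c : Fin (d + 1), c ≠ 0 → ∀ a ∈ G.verts, (G.edge c a).isSome)

/-- `p = (n, n̄)` is a (color-0, i.e. propagator) line of `G`. -/
def isLine (G : PreGraph d V) (p : V × V) : Prop := G.edge 0 p.1 = some p.2

/-- Reconnection of a matching after deletion of the two nodes `n, m`:
partners of `n` and `m` get joined to each other. -/
def reconnect [DecidableEq V] (e : V → Option V) (n m : V) : V → Option V := fun a =>
  if a = n ∨ a = m then none
  else
    match e a with
    | none => none
    | some x =>
      if x = n then
        match e m with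
        | none => none
        | some b => if b = n ∨ b = m then none else some b
      else if x = m then
        match e n with
        | none => none
        | some b => if b = n ∨ b = m then none else some b
      else some x

/-- Contraction of the color-0 line (dipole) with end nodes `n, m`: the two nodes are
deleted together with all colored lines joining them, and the remaining open half-lines
are reconnected according to their colors. -/
def contractLine [DecidableEq V] (G : PreGraph d V) (n m : V) : PreGraph d V :=
  ⟨G.verts \ {n, m}, fun c => reconnect (G.edge c) n m⟩

/-- Successive contraction of a list of lines. -/
def contractList [DecidableEq V] : PreGraph d V → List (V × V) → PreGraph d V
  | G, [] => G
  | G, p :: r => contractList (contractLine G p.1 p.2) r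

/-- One step along a face of color `c`: cross the color-`c` line then the color-0 line. -/
def faceStep (G : PreGraph d V) (c : Fin (d + 1)) (a : V) : Option V :=
  (G.edge c a).bind (G.edge 0)

/-- Iterated face steps. -/
def iterStep (G : PreGraph d V) (c : Fin (d + 1)) : ℕ → V → Option V
  | 0, a => some a
  | k + 1, a => (faceStep G c a).bind (iterStep G c k)

/-- The (oriented) color-0 line crossed by the face of color `c` right after node `b`. -/
def crossedPair (G : PreGraph d V) (c : Fin (d + 1)) (b : V) : Option (V × V) :=
  match G.edge c b with
  | none => none
  | some x =>
    match G.edge 0 x with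
    | none => none
    | some y => some (x, y)

/-- Two ordered pairs represent the same unordered line. -/
def pairMatch (p q : V × V) : Prop := p = q ∨ p = (q.2, q.1)

/-- The face of color `c` through node `a` closes with period `k` (an internal face of `G`). -/
def ClosedFace (G : PreGraph d V) (c : Fin (d + 1)) (a : V) (k : ℕ) : Prop :=
  0 < k ∧ iterStep G c k a = some a

/-- The face of color `c` (of period `k`, based at `a`) passes through the line `p`. -/
def FaceCrosses (G : PreGraph d V) (c : Fin (d + 1)) (a : V) (k : ℕ) (p : V × V) : Prop :=
  ∃ j < k, ∃ b, iterStep G c j a = some b ∧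
    ∃ xy, crossedPair G c b = some xy ∧ pairMatch xy p

/-- A closed face all of whose color-0 lines belong to the subgraph `S`
(an internal face of the subgraph `S`). -/
def ClosedFaceIn (G : PreGraph d V) (S : Finset (V × V)) (c : Fin (d + 1)) (a : V)
    (k : ℕ) : Prop :=
  ClosedFace G c a k ∧
    ∀ j < k, ∀ b, iterStep G c j a = some b →
      ∃ q ∈ S, ∃ xy, crossedPair G c b = some xy ∧ pairMatch xy q

/-- Two lines of `S` lie on a common internal face of `S`: this realizes the line–face
incidence used to define connectedness of tensorial subgraphs. -/
def InternalFaceRel (G : PreGraph d V) (S : Finset (V × V)) (p q : V × V) : Prop :=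
  ∃ c : Fin (d + 1), c ≠ 0 ∧ ∃ a k, ClosedFaceIn G S c a k ∧
    FaceCrosses G c a k p ∧ FaceCrosses G c a k q

/-- Connectedness of the subgraph `S` in the tensorial (face-incidence) sense. -/
def ConnectedSub (G : PreGraph d V) (S : Finset (V × V)) : Prop :=
  ∀ p ∈ S, ∀ q ∈ S, Relation.EqvGen (InternalFaceRel G S) p q

/-- Two lines of `G` lie on a common closed face of `G`. -/
def WholeFaceRel (G : PreGraph d V) (p q : V × V) : Prop :=
  ∃ c : Fin (d + 1), c ≠ 0 ∧ ∃ a k, ClosedFace G c a k ∧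
    FaceCrosses G c a k p ∧ FaceCrosses G c a k q

/-- Connectedness of `G` in the tensorial sense: the line–face incidence matrix does not
factorize into blocks, i.e. all pairs of lines are related through internal faces. -/
def GraphConnected (G : PreGraph d V) : Prop :=
  ∀ p q : V × V, isLine G p → isLine G q → Relation.EqvGen (WholeFaceRel G) p q

/-- Number of additional colored lines joining the two end nodes of a line:
a line is a `k`-dipole iff this number is `k - 1`. -/
def shareCount [DecidableEq V] (G : PreGraph d V) (n m : V) : ℕ :=
  (Finset.univ.filter (fun c : Fin (d + 1) => c ≠ 0 ∧ G.edge c n = some m)).card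

/-- Hepp-sector condition of a melopole: each line, in order, is (at least) a `d`-dipole
of the graph in which the previous lines have been contracted. -/
def MeloSteps [DecidableEq V] : PreGraph d V → List (V × V) → Prop
  | _, [] => True
  | G, p :: r => isLine G p ∧ d - 1 ≤ shareCount G p.1 p.2 ∧
      MeloSteps (contractLine G p.1 p.2) r

/-- Adjacency through the colored (non-0) lines: nodes of the same bubble (vertex). -/
def ColoredAdj (G : PreGraph d V) (a b : V) : Prop :=
  ∃ c : Fin (d + 1), c ≠ 0 ∧ G.edge c a = some b

/-- Two nodes belong to the same bubble (interaction vertex). -/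
def SameBubble (G : PreGraph d V) (a b : V) : Prop := Relation.EqvGen (ColoredAdj G) a b

/-- A melopole: a nonempty connected single-vertex (tadpole) subgraph whose lines admit
an ordering (Hepp sector) in which each successive quotient is a `d`-dipole. -/
def IsMelopole [DecidableEq V] (G : PreGraph d V) (S : Finset (V × V)) : Prop :=
  S.Nonempty ∧ (∀ p ∈ S, isLine G p) ∧
  (∀ p ∈ S, ∀ q ∈ S, SameBubble G p.1 q.1) ∧
  (∀ p ∈ S, SameBubble G p.1 p.2) ∧
  ConnectedSub G S ∧
  ∃ l : List (V × V), l.Nodup ∧ l.toFinset = S ∧ MeloSteps G l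

/-- Two line sets are face-disjoint: no closed face of `G` passes through a line of each. -/
def FaceDisjointSets (G : PreGraph d V) (H H' : Finset (V × V)) : Prop :=
  ¬ ∃ c : Fin (d + 1), c ≠ 0 ∧ ∃ a k, ClosedFace G c a k ∧
      (∃ p ∈ H, FaceCrosses G c a k p) ∧ ∃ q ∈ H', FaceCrosses G c a k q

/-! ### The φ⁶ bubble of the appendix and its closures.

Nodes `0,2,4` are the white nodes `w₁,w₂,w₃` and `1,3,5` the black nodes `b₁,b₂,b₃` of
the order-6 melonic bubble invariant `S` (Fig. 12a).  The colored lines (colors 1–4)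
below encode exactly the variable identifications of the interaction
`φ(g₁g₂g₃g₄) φ̄(g₁g₂g₃g₅) φ(g₈g₇g₆g₅) φ̄(g₈g₉g₁₀g₁₁) φ(g₁₂g₉g₁₀g₁₁) φ̄(g₁₂g₇g₆g₄)`. -/

def wht (i : Fin 3) : Fin 6 := ⟨2 * (i : ℕ), by have := i.isLt; omega⟩
def blk (j : Fin 3) : Fin 6 := ⟨2 * (j : ℕ) + 1, by have := j.isLt; omega⟩

def pair1 : Fin 6 → Fin 6 := ![1, 0, 3, 2, 5, 4]
def pair2 : Fin 6 → Fin 6 := ![1, 0, 5, 4, 3, 2]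
def pair4 : Fin 6 → Fin 6 := ![5, 2, 1, 4, 3, 0]

/-- The colored (non-0) edges of the φ⁶ bubble. -/
def bubbleEdge (c : Fin 5) (a : Fin 6) : Option (Fin 6) :=
  if c = 1 then some (pair1 a)
  else if c = 2 then some (pair2 a)
  else if c = 3 then some (pair2 a)
  else if c = 4 then some (pair4 a)
  else none

/-- The color-0 closure determined by the pairing `σ` of white and black nodes. -/
def closureEdge (σ : Equiv.Perm (Fin 3)) (a : Fin 6) : Option (Fin 6) :=
  if (a : ℕ) % 2 = 0 then some (blk (σ ⟨(a : ℕ) / 2, by have := a.isLt; omega⟩))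
  else some (wht (σ⁻¹ ⟨(a : ℕ) / 2, by have := a.isLt; omega⟩))

/-- The vacuum graph with single vertex the φ⁶ bubble obtained by the closure `σ`. -/
def Gclosure (σ : Equiv.Perm (Fin 3)) : PreGraph 4 (Fin 6) :=
  ⟨univ, fun c a => if c = 0 then closureEdge σ a else bubbleEdge c a⟩

/-- The three color-0 lines of the closure `σ`. -/
def linesOf (σ : Equiv.Perm (Fin 3)) : Finset (Fin 6 × Fin 6) :=
  univ.image fun i : Fin 3 => (wht i, blk (σ i))

/-- The closure of Fig. 12b: `l₁ = (w₁,b₁)`, `l₂ = (w₂,b₃)`, `l₃ = (w₃,b₂)`. -/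
def σ₀ : Equiv.Perm (Fin 3) := Equiv.swap 1 2

/-- Meloforests of the vacuum graph `Gclosure σ₀`: sets of melopoles, pairwise nested or
line- and face-disjoint. -/
def IsMeloforest6 (F : Finset (Finset (Fin 6 × Fin 6))) : Prop :=
  (∀ H ∈ F, H ⊆ linesOf σ₀ ∧ IsMelopole (Gclosure σ₀) H) ∧
  ∀ H ∈ F, ∀ H' ∈ F, H ≠ H' →
    H ⊆ H' ∨ H' ⊆ H ∨ (Disjoint H H' ∧ FaceDisjointSets (Gclosure σ₀) H H')

/-! ### Auxiliary infrastructure -/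

section Aux

instance isLine.dec [DecidableEq V] (G : PreGraph d V) (p : V × V) :
    Decidable (isLine G p) := decidable_of_iff (G.edge 0 p.1 = some p.2) Iff.rfl

instance pairMatch.dec [DecidableEq V] (p q : V × V) : Decidable (pairMatch p q) :=
  decidable_of_iff (p = q ∨ p = (q.2, q.1)) Iff.rfl

instance ClosedFace.dec [DecidableEq V] (G : PreGraph d V) (c : Fin (d+1)) (a : V) (k : ℕ) :
    Decidable (ClosedFace G c a k) :=
  decidable_of_iff (0 < k ∧ iterStep G c k a = some a) Iff.rfl

instance FaceCrosses.dec [DecidableEq V] [Fintype V] (G : PreGraph d V) (c : Fin (d+1))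
    (a : V) (k : ℕ) (p : V × V) : Decidable (FaceCrosses G c a k p) :=
  decidable_of_iff (¬ ∀ j, j < k → ¬ ∃ b, iterStep G c j a = some b ∧
      ∃ xy, crossedPair G c b = some xy ∧ pairMatch xy p) (by
    unfold FaceCrosses; push_neg; constructor
    · rintro ⟨j, hj, h⟩; exact ⟨j, hj, h⟩
    · rintro ⟨j, hj, h⟩; exact ⟨j, hj, h⟩)

instance ClosedFaceIn.dec [DecidableEq V] [Fintype V] (G : PreGraph d V)
    (S : Finset (V × V)) (c : Fin (d+1)) (a : V) (k : ℕ) :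
    Decidable (ClosedFaceIn G S c a k) := by unfold ClosedFaceIn; infer_instance

instance ColoredAdj.dec [DecidableEq V] (G : PreGraph d V) (a b : V) :
    Decidable (ColoredAdj G a b) := by unfold ColoredAdj; infer_instance

instance MeloSteps.dec [DecidableEq V] :
    ∀ (G : PreGraph d V) (l : List (V × V)), Decidable (MeloSteps G l)
  | _, [] => isTrue trivial
  | G, p :: r =>
    have : Decidable (MeloSteps (contractLine G p.1 p.2) r) := MeloSteps.dec _ r
    decidable_of_iff (G.edge 0 p.1 = some p.2 ∧ d - 1 ≤ shareCount G p.1 p.2 ∧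
      MeloSteps (contractLine G p.1 p.2) r) (by rw [MeloSteps]; exact Iff.rfl)

/-- The three lines of the closure `σ₀`. -/
abbrev l1 : Fin 6 × Fin 6 := (0, 1)
abbrev l2 : Fin 6 × Fin 6 := (2, 5)
abbrev l3 : Fin 6 × Fin 6 := (4, 3)

abbrev G0 : PreGraph 4 (Fin 6) := Gclosure σ₀

/-- Total face step of `G0`. -/
def gstep (c : Fin 5) (a : Fin 6) : Fin 6 := (faceStep G0 c a).getD 0

lemma faceStep_eq : ∀ (c : Fin 5) (a : Fin 6), faceStep G0 c a = some (gstep c a) := by decide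

/-- The crossed line at a node. -/
def cp (c : Fin 5) (b : Fin 6) : Fin 6 × Fin 6 := (crossedPair G0 c b).getD (0, 0)

lemma cp_eq : ∀ (c : Fin 5) (b : Fin 6), crossedPair G0 c b = some (cp c b) := by decide

lemma iter_eq (c : Fin 5) : ∀ (j : ℕ) (a : Fin 6),
    iterStep G0 c j a = some ((gstep c)^[j] a) := by
  intro j; induction j with
  | zero => intro a; rfl
  | succ n ih =>
      intro a
      show (faceStep G0 c a).bind (iterStep G0 c n) = _
      rw [faceStep_eq, Option.bind_some, ih, Function.iterate_succ_apply]

/-- The color-`c` invariant region containing the `l₁`-crossing nodes. -/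
def Sreg (c : Fin 5) : Finset (Fin 6) := if c = 4 then {0, 1, 2, 5} else {0, 1}

lemma reg_facts : ∀ (c : Fin 5) (b : Fin 6),
    ((cp c b = (0,1) ∨ cp c b = (1,0)) → b ∈ Sreg c) ∧
    (b ∈ Sreg c → gstep c b ∈ Sreg c) ∧
    (b ∈ Sreg c → ¬ (cp c b = (4,3) ∨ cp c b = (3,4))) := by decide

/-- Core orbit lemma: a closed face crossing `l₁` never crosses `l₃`. -/
lemma core {c : Fin 5} {a : Fin 6} {k j₁ j₂ : ℕ}
    (hcl : (gstep c)^[k] a = a) (h1 : j₁ < k) (h2 : j₂ < k)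
    (ht : cp c ((gstep c)^[j₁] a) = (0,1) ∨ cp c ((gstep c)^[j₁] a) = (1,0)) :
    ¬ (cp c ((gstep c)^[j₂] a) = (4,3) ∨ cp c ((gstep c)^[j₂] a) = (3,4)) := by
  have hmem : ∀ m : ℕ, (gstep c)^[j₁ + m] a ∈ Sreg c := by
    intro m; induction m with
    | zero => exact (reg_facts c _).1 ht
    | succ n ih =>
        have : j₁ + (n + 1) = (j₁ + n) + 1 := rfl
        rw [this, Function.iterate_succ_apply']
        exact ((reg_facts c _).2.1 ih)
  have hkey : (gstep c)^[j₂] a ∈ Sreg c := by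
    have h : j₁ + ((k - j₁) + j₂) = j₂ + k := by omega
    have := hmem ((k - j₁) + j₂)
    rw [h, Function.iterate_add_apply, hcl] at this
    exact this
  exact (reg_facts c _).2.2 hkey

end Aux
section Aux2

/-- All six nodes belong to the same bubble. -/
lemma sameBubble_all : ∀ a b : Fin 6, SameBubble G0 a b := by
  have adj : ∀ (c : Fin 5) (a b : Fin 6), c ≠ 0 → G0.edge c a = some b →
      Relation.EqvGen (ColoredAdj G0) a b := fun c a b hc h => .rel _ _ ⟨c, hc, h⟩
  have ch : ∀ n : Fin 6, Relation.EqvGen (ColoredAdj G0) 0 n := by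
    have e01 := adj 1 0 1 (by decide) (by decide)
    have e12 := adj 4 1 2 (by decide) (by decide)
    have e23 := adj 1 2 3 (by decide) (by decide)
    have e34 := adj 2 3 4 (by decide) (by decide)
    have e45 := adj 1 4 5 (by decide) (by decide)
    intro n
    fin_cases n
    · exact .refl 0
    · exact e01
    · exact e01.trans _ _ _ e12
    · exact (e01.trans _ _ _ e12).trans _ _ _ e23
    · exact ((e01.trans _ _ _ e12).trans _ _ _ e23).trans _ _ _ e34
    · exact (((e01.trans _ _ _ e12).trans _ _ _ e23).trans _ _ _ e34).trans _ _ _ e45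
  exact fun a b => ((ch a).symm _ _).trans _ _ _ (ch b)

/-- Face-incidence relation witnesses. -/
lemma rel12 (S : Finset (Fin 6 × Fin 6)) (h1 : l1 ∈ S) (h2 : l2 ∈ S)
    (hS : S ⊆ {l1, l2, l3}) : InternalFaceRel G0 S l1 l2 := by
  refine ⟨4, by decide, 0, 2, ⟨by decide, ?_⟩, by decide, by decide⟩
  intro j hj b hb
  interval_cases j
  · exact ⟨l2, h2, by revert b hb; decide⟩
  · exact ⟨l1, h1, by revert b hb; decide⟩

lemma rel23 (S : Finset (Fin 6 × Fin 6)) (h2 : l2 ∈ S) (h3 : l3 ∈ S)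
    (hS : S ⊆ {l1, l2, l3}) : InternalFaceRel G0 S l2 l3 := by
  refine ⟨1, by decide, 2, 2, ⟨by decide, ?_⟩, by decide, by decide⟩
  intro j hj b hb
  interval_cases j
  · exact ⟨l3, h3, by revert b hb; decide⟩
  · exact ⟨l2, h2, by revert b hb; decide⟩

/-- Melopole positivity: the four strict melopoles and the full graph. -/
lemma melopole_of (S : Finset (Fin 6 × Fin 6)) (hS : S ⊆ {l1, l2, l3})
    (hne : S.Nonempty)
    (hconn : ConnectedSub G0 S)
    (l : List (Fin 6 × Fin 6)) (hnd : l.Nodup) (hfin : l.toFinset = S)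
    (hms : MeloSteps G0 l) : IsMelopole G0 S :=
  ⟨hne, fun p hp => by
    have h : p ∈ ({l1, l2, l3} : Finset (Fin 6 × Fin 6)) := hS hp
    clear hp; revert p; decide,
    fun p _ q _ => sameBubble_all _ _, fun p _ => sameBubble_all _ _,
    hconn, l, hnd, hfin, hms⟩

lemma conn_singleton (p0 : Fin 6 × Fin 6) : ConnectedSub G0 {p0} := by
  intro p hp q hq
  simp only [Finset.mem_singleton] at hp hq
  subst hp; subst hq; exact .refl _

lemma mel_A1 : IsMelopole G0 {l1} :=
  melopole_of _ (by decide) ⟨l1, by decide⟩ (conn_singleton l1) [l1] (by decide) (by decide)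
    (by decide)

lemma mel_A3 : IsMelopole G0 {l3} :=
  melopole_of _ (by decide) ⟨l3, by decide⟩ (conn_singleton l3) [l3] (by decide) (by decide)
    (by decide)

lemma conn_pair {p0 q0 : Fin 6 × Fin 6} (h : InternalFaceRel G0 {p0, q0} p0 q0) :
    ConnectedSub G0 {p0, q0} := by
  intro p hp q hq
  simp only [Finset.mem_insert, Finset.mem_singleton] at hp hq
  rcases hp with rfl | rfl <;> rcases hq with rfl | rfl
  · exact .refl _
  · exact .rel _ _ h
  · exact .symm _ _ (.rel _ _ h)
  · exact .refl _

lemma mel_A12 : IsMelopole G0 {l1, l2} :=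
  melopole_of _ (by decide) ⟨l1, by decide⟩
    (conn_pair (rel12 _ (by decide) (by decide) (by decide)))
    [l1, l2] (by decide) (by decide) (by decide)

lemma mel_A23 : IsMelopole G0 {l2, l3} :=
  melopole_of _ (by decide) ⟨l2, by decide⟩
    (by
      have h := rel23 {l2, l3} (by decide) (by decide) (by decide)
      intro p hp q hq
      simp only [Finset.mem_insert, Finset.mem_singleton] at hp hq
      rcases hp with rfl | rfl <;> rcases hq with rfl | rfl
      · exact .refl _
      · exact .rel _ _ h
      · exact .symm _ _ (.rel _ _ h)
      · exact .refl _)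
    [l3, l2] (by decide) (by decide) (by decide)

lemma lines_eq : linesOf σ₀ = {l1, l2, l3} := by decide

lemma mel_full : IsMelopole G0 {l1, l2, l3} := by
  refine melopole_of _ (by decide) ⟨l1, by decide⟩ ?_ [l1, l2, l3] (by decide) (by decide)
    (by decide)
  have h12 := rel12 {l1, l2, l3} (by decide) (by decide) (by decide)
  have h23 := rel23 {l1, l2, l3} (by decide) (by decide) (by decide)
  intro p hp q hq
  simp only [Finset.mem_insert, Finset.mem_singleton] at hp hq
  rcases hp with rfl | rfl | rfl <;> rcases hq with rfl | rfl | rfl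
  · exact .refl _
  · exact .rel _ _ h12
  · exact (Relation.EqvGen.rel _ _ h12).trans _ _ _ (.rel _ _ h23)
  · exact .symm _ _ (.rel _ _ h12)
  · exact .refl _
  · exact .rel _ _ h23
  · exact .symm _ _ ((Relation.EqvGen.rel _ _ h12).trans _ _ _ (.rel _ _ h23))
  · exact .symm _ _ (.rel _ _ h23)
  · exact .refl _

end Aux2
section Aux3

/-- Helper: no valid Hepp ordering means no melopole. -/
lemma not_melopole_of_lists' (Gr : PreGraph 4 (Fin 6)) (S : Finset (Fin 6 × Fin 6))
    (L0 : List (Fin 6 × Fin 6)) (hnd : L0.Nodup) (hfin : L0.toFinset = S)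
    (hbad : ∀ l' ∈ L0.permutations', ¬ MeloSteps Gr l') : ¬ IsMelopole Gr S := by
  rintro ⟨-, -, -, -, -, l, hnd', hfin', hms⟩
  have hp : l.Perm L0 :=
    List.perm_of_nodup_nodup_toFinset_eq hnd' hnd (hfin'.trans hfin.symm)
  exact hbad l (List.mem_permutations'.2 hp) hms

lemma not_mel_A2 : ¬ IsMelopole G0 {l2} :=
  not_melopole_of_lists' _ _ [l2] (by decide) (by decide) (by decide)

/-- Invariance of a predicate along `EqvGen`. -/
lemma eqvGen_invariant {α : Type*} {R : α → α → Prop} (P : α → Prop)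
    (hR : ∀ p q, R p q → (P p ↔ P q)) :
    ∀ p q, Relation.EqvGen R p q → (P p ↔ P q) := by
  intro p q h
  induction h with
  | rel _ _ h => exact hR _ _ h
  | refl => exact Iff.rfl
  | symm _ _ _ ih => exact ih.symm
  | trans _ _ _ _ _ ih1 ih2 => exact ih1.trans ih2

/-- One-step invariance: a face of `{l1, l3}` crossing an `l1`-type line only crosses
`l1`-type lines. -/
lemma step13 {p q : Fin 6 × Fin 6}
    (h : InternalFaceRel G0 {l1, l3} p q) (hp : p = (0,1) ∨ p = (1,0)) :
    q = (0,1) ∨ q = (1,0) := by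
  obtain ⟨c, hc, a, k, ⟨⟨hk, hclose⟩, hall⟩, hcp, hcq⟩ := h
  rw [iter_eq] at hclose
  have hclose' : (gstep c)^[k] a = a := Option.some.inj hclose
  obtain ⟨j₁, hj₁, b₁, hb₁, xy₁, hxy₁, hm₁⟩ := hcp
  obtain ⟨j₂, hj₂, b₂, hb₂, xy₂, hxy₂, hm₂⟩ := hcq
  rw [iter_eq] at hb₁ hb₂
  have hb₁' : b₁ = (gstep c)^[j₁] a := (Option.some.inj hb₁).symm
  have hb₂' : b₂ = (gstep c)^[j₂] a := (Option.some.inj hb₂).symm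
  rw [cp_eq] at hxy₁ hxy₂
  have hxy₁' : xy₁ = cp c b₁ := (Option.some.inj hxy₁).symm
  have hxy₂' : xy₂ = cp c b₂ := (Option.some.inj hxy₂).symm
  -- xy₁ is l1-type
  have ht1 : cp c ((gstep c)^[j₁] a) = (0,1) ∨ cp c ((gstep c)^[j₁] a) = (1,0) := by
    rw [← hb₁', ← hxy₁']
    rcases hm₁ with rfl | rfl <;> rcases hp with rfl | rfl
    · exact Or.inl rfl
    · exact Or.inr rfl
    · exact Or.inr rfl
    · exact Or.inl rfl
  -- hence xy₂ is not l3-type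
  have hn3 : ¬ (cp c ((gstep c)^[j₂] a) = (4,3) ∨ cp c ((gstep c)^[j₂] a) = (3,4)) :=
    core hclose' hj₁ hj₂ ht1
  -- but xy₂ matches into {l1, l3}
  obtain ⟨s, hs, xy, hxy, hm⟩ := hall j₂ hj₂ b₂ (by rw [iter_eq, hb₂'])
  rw [cp_eq] at hxy
  have hxyv : xy = cp c b₂ := (Option.some.inj hxy).symm
  simp only [Finset.mem_insert, Finset.mem_singleton] at hs
  have htype : (cp c b₂ = (0,1) ∨ cp c b₂ = (1,0)) ∨
      (cp c b₂ = (4,3) ∨ cp c b₂ = (3,4)) := by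
    rcases hs with rfl | rfl <;> rcases hm with h' | h' <;>
      rw [hxyv] at h' <;> simp [h']
  rcases htype with h1 | h3
  · -- xy₂ is l1-type, so q matches it
    have hx : xy₂ = ((0:Fin 6),(1:Fin 6)) ∨ xy₂ = ((1:Fin 6),(0:Fin 6)) := by
      rw [hxy₂']; exact h1
    rcases hm₂ with rfl | h'
    · exact hx
    · obtain ⟨q1, q2⟩ := q
      rcases hx with rfl | rfl <;> simp only [Prod.mk.injEq] at h' <;>
        obtain ⟨ha, hb⟩ := h' <;> subst ha <;> subst hb <;> simp
  · exact absurd (hb₂' ▸ h3) hn3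

lemma not_mel_A13 : ¬ IsMelopole G0 {l1, l3} := by
  rintro ⟨-, -, -, -, hconn, -⟩
  have h := hconn l1 (by decide) l3 (by decide)
  have hinv := eqvGen_invariant (R := InternalFaceRel G0 {l1, l3})
    (fun p => p = (0,1) ∨ p = (1,0))
    (fun p q hpq => ⟨step13 hpq, step13 (by
      obtain ⟨c, hc, a, k, hcl, h1, h2⟩ := hpq; exact ⟨c, hc, a, k, hcl, h2, h1⟩)⟩) l1 l3 h
  have : l3 = ((0:Fin 6),(1:Fin 6)) ∨ l3 = ((1:Fin 6),(0:Fin 6)) := hinv.1 (Or.inl rfl)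
  revert this; decide

/-- `{l1}` and `{l3}` are face-disjoint. -/
lemma fd13 : FaceDisjointSets G0 {l1} {l3} := by
  rintro ⟨c, hc, a, k, ⟨hk, hclose⟩, ⟨p, hpS, hp⟩, q, hqS, hq⟩
  simp only [Finset.mem_singleton] at hpS hqS
  subst hpS; subst hqS
  rw [iter_eq] at hclose
  have hclose' : (gstep c)^[k] a = a := Option.some.inj hclose
  obtain ⟨j₁, hj₁, b₁, hb₁, xy₁, hxy₁, hm₁⟩ := hp
  obtain ⟨j₂, hj₂, b₂, hb₂, xy₂, hxy₂, hm₂⟩ := hq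
  rw [iter_eq] at hb₁ hb₂
  rw [cp_eq] at hxy₁ hxy₂
  have hb₁' : b₁ = (gstep c)^[j₁] a := (Option.some.inj hb₁).symm
  have hb₂' : b₂ = (gstep c)^[j₂] a := (Option.some.inj hb₂).symm
  have hxy₁' : xy₁ = cp c b₁ := (Option.some.inj hxy₁).symm
  have hxy₂' : xy₂ = cp c b₂ := (Option.some.inj hxy₂).symm
  have ht1 : cp c ((gstep c)^[j₁] a) = (0,1) ∨ cp c ((gstep c)^[j₁] a) = (1,0) := by
    rw [← hb₁', ← hxy₁']; rcases hm₁ with rfl | rfl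
    · exact Or.inl rfl
    · exact Or.inr rfl
  have ht3 : cp c ((gstep c)^[j₂] a) = (4,3) ∨ cp c ((gstep c)^[j₂] a) = (3,4) := by
    rw [← hb₂', ← hxy₂']; rcases hm₂ with rfl | rfl
    · exact Or.inl rfl
    · exact Or.inr rfl
  exact core hclose' hj₁ hj₂ ht1 ht3

lemma fd_symm {Gr : PreGraph 4 (Fin 6)} {H H' : Finset (Fin 6 × Fin 6)}
    (h : FaceDisjointSets Gr H H') : FaceDisjointSets Gr H' H := by
  rintro ⟨c, hc, a, k, hcl, h1, h2⟩
  exact h ⟨c, hc, a, k, hcl, h2, h1⟩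

lemma fd31 : FaceDisjointSets G0 {l3} {l1} := fd_symm fd13

/-- Non-face-disjoint pairs. -/
lemma not_fd_1_23 : ¬ FaceDisjointSets G0 {l1} {l2, l3} := fun h =>
  h ⟨4, by decide, 0, 2, by decide, ⟨l1, by decide, by decide⟩, ⟨l2, by decide, by decide⟩⟩

lemma not_fd_3_12 : ¬ FaceDisjointSets G0 {l3} {l1, l2} := fun h =>
  h ⟨1, by decide, 2, 2, by decide, ⟨l3, by decide, by decide⟩, ⟨l2, by decide, by decide⟩⟩

lemma not_fd_23_1 : ¬ FaceDisjointSets G0 {l2, l3} {l1} := fun h => not_fd_1_23 (fd_symm h)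
lemma not_fd_12_3 : ¬ FaceDisjointSets G0 {l1, l2} {l3} := fun h => not_fd_3_12 (fd_symm h)

end Aux3
section Aux4

lemma subset_cases {H : Finset (Fin 6 × Fin 6)} (h : H ⊆ {l1, l2, l3}) :
    H = ∅ ∨ H = {l1} ∨ H = {l2} ∨ H = {l3} ∨ H = {l1, l2} ∨ H = {l1, l3} ∨
      H = {l2, l3} ∨ H = {l1, l2, l3} := by
  have hmem : H ∈ ({l1, l2, l3} : Finset (Fin 6 × Fin 6)).powerset :=
    Finset.mem_powerset.2 h
  fin_cases hmem <;> decide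
end Aux4
section Aux5

lemma bad_closure (τ : Equiv.Perm (Fin 3)) (L0 : List (Fin 6 × Fin 6))
    (hnd : L0.Nodup) (hfin : L0.toFinset = linesOf τ)
    (hbad : ∀ l' ∈ L0.permutations', ¬ MeloSteps (Gclosure τ) l')
    (σ : Equiv.Perm (Fin 3)) (hστ : σ = τ)
    (hσ : IsMelopole (Gclosure σ) (linesOf σ)) : False := by
  have h := not_melopole_of_lists' (Gclosure τ) (linesOf τ) L0 hnd hfin hbad
  exact h (hστ ▸ hσ)

lemma perm3_det (σ τ : Equiv.Perm (Fin 3)) (h0 : σ 0 = τ 0) (h1 : σ 1 = τ 1)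
    (h2 : σ 2 = τ 2) : σ = τ := by
  have hy : ∀ y : Fin 3, y = 0 ∨ y = 1 ∨ y = 2 := by decide
  exact Equiv.ext fun x => by rcases hy x with rfl | rfl | rfl <;> assumption

lemma unique_closure : ∀ σ : Equiv.Perm (Fin 3),
    IsMelopole (Gclosure σ) (linesOf σ) → σ = σ₀ := by
  have hy : ∀ y : Fin 3, y = 0 ∨ y = 1 ∨ y = 2 := by decide
  intro σ hσ
  have inj := σ.injective
  rcases hy (σ 0) with h0 | h0 | h0 <;> rcases hy (σ 1) with h1 | h1 | h1 <;>
    rcases hy (σ 2) with h2 | h2 | h2 <;>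
    first
      | exact absurd (inj (h0.trans h1.symm)) (by decide)
      | exact absurd (inj (h0.trans h2.symm)) (by decide)
      | exact absurd (inj (h1.trans h2.symm)) (by decide)
      | exact perm3_det σ σ₀ (h0.trans (by decide)) (h1.trans (by decide))
          (h2.trans (by decide))
      | exact (bad_closure 1
          [((0:Fin 6),(1:Fin 6)), ((2:Fin 6),(3:Fin 6)), ((4:Fin 6),(5:Fin 6))]
          (by decide) (by decide) (by decide) σ
          (perm3_det σ 1 (h0.trans (by decide)) (h1.trans (by decide))
            (h2.trans (by decide))) hσ).elim
      | exact (bad_closure (Equiv.swap 0 1)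
          [((0:Fin 6),(3:Fin 6)), ((2:Fin 6),(1:Fin 6)), ((4:Fin 6),(5:Fin 6))]
          (by decide) (by decide) (by decide) σ
          (perm3_det σ _ (h0.trans (by decide)) (h1.trans (by decide))
            (h2.trans (by decide))) hσ).elim
      | exact (bad_closure (Equiv.swap 0 2)
          [((0:Fin 6),(5:Fin 6)), ((2:Fin 6),(3:Fin 6)), ((4:Fin 6),(1:Fin 6))]
          (by decide) (by decide) (by decide) σ
          (perm3_det σ _ (h0.trans (by decide)) (h1.trans (by decide))
            (h2.trans (by decide))) hσ).elim
      | exact (bad_closure (Equiv.swap 0 2 * Equiv.swap 0 1)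
          [((0:Fin 6),(3:Fin 6)), ((2:Fin 6),(5:Fin 6)), ((4:Fin 6),(1:Fin 6))]
          (by decide) (by decide) (by decide) σ
          (perm3_det σ _ (h0.trans (by decide)) (h1.trans (by decide))
            (h2.trans (by decide))) hσ).elim
      | exact (bad_closure (Equiv.swap 0 1 * Equiv.swap 0 2)
          [((0:Fin 6),(5:Fin 6)), ((2:Fin 6),(1:Fin 6)), ((4:Fin 6),(3:Fin 6))]
          (by decide) (by decide) (by decide) σ
          (perm3_det σ _ (h0.trans (by decide)) (h1.trans (by decide))
            (h2.trans (by decide))) hσ).elim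

end Aux5
section Aux6

abbrev A1 : Finset (Fin 6 × Fin 6) := {l1}
abbrev A3 : Finset (Fin 6 × Fin 6) := {l3}
abbrev A12 : Finset (Fin 6 × Fin 6) := {l1, l2}
abbrev A23 : Finset (Fin 6 × Fin 6) := {l2, l3}
abbrev Afull : Finset (Fin 6 × Fin 6) := {l1, l2, l3}

def Msets : Finset (Finset (Fin 6 × Fin 6)) := {A1, A3, A12, A23, Afull}

def Lforests : Finset (Finset (Finset (Fin 6 × Fin 6))) :=
  {∅, {A1}, {A3}, {A12}, {A23}, {A1, A12}, {A3, A23}, {A1, A3},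
   {Afull}, {A1, Afull}, {A3, Afull}, {A12, Afull}, {A23, Afull},
   {A1, A12, Afull}, {A3, A23, Afull}, {A1, A3, Afull}}

/-- Pairwise compatibility: nested, or the pair `{S₁}, {S₃}`. -/
def Compat (H H' : Finset (Fin 6 × Fin 6)) : Prop :=
  H ⊆ H' ∨ H' ⊆ H ∨ (H = A1 ∧ H' = A3) ∨ (H = A3 ∧ H' = A1)

instance Compat.dec (H H' : Finset (Fin 6 × Fin 6)) : Decidable (Compat H H') :=
  decidable_of_iff (H ⊆ H' ∨ H' ⊆ H ∨ (H = A1 ∧ H' = A3) ∨ (H = A3 ∧ H' = A1)) Iff.rfl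

lemma meloforest_of (F : Finset (Finset (Fin 6 × Fin 6))) (hsub : F ⊆ Msets)
    (hc : ∀ H ∈ F, ∀ H' ∈ F, H ≠ H' → Compat H H') : IsMeloforest6 F := by
  constructor
  · intro H hH
    have h := hsub hH
    fin_cases h
    · exact ⟨by rw [lines_eq]; decide, mel_A1⟩
    · exact ⟨by rw [lines_eq]; decide, mel_A3⟩
    · exact ⟨by rw [lines_eq]; decide, mel_A12⟩
    · exact ⟨by rw [lines_eq]; decide, mel_A23⟩
    · exact ⟨by rw [lines_eq], mel_full⟩
  · intro H hH H' hH' hne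
    rcases hc H hH H' hH' hne with h | h | ⟨rfl, rfl⟩ | ⟨rfl, rfl⟩
    · exact Or.inl h
    · exact Or.inr (Or.inl h)
    · exact Or.inr (Or.inr ⟨by decide, fd13⟩)
    · exact Or.inr (Or.inr ⟨by decide, fd31⟩)

lemma mem_Msets {F : Finset (Finset (Fin 6 × Fin 6))} (hF : IsMeloforest6 F) :
    ∀ H ∈ F, H ∈ Msets := by
  intro H hH
  obtain ⟨hsub, hmel⟩ := hF.1 H hH
  rw [lines_eq] at hsub
  rcases subset_cases hsub with rfl | rfl | rfl | rfl | rfl | rfl | rfl | rfl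
  · exact absurd hmel.1 (by simp)
  · decide
  · exact absurd hmel not_mel_A2
  · decide
  · decide
  · exact absurd hmel not_mel_A13
  · decide
  · decide

lemma compat_of {F : Finset (Finset (Fin 6 × Fin 6))} (hF : IsMeloforest6 F) :
    ∀ H ∈ F, ∀ H' ∈ F, H ≠ H' → Compat H H' := by
  intro H hH H' hH' hne
  have h1 := mem_Msets hF H hH
  have h2 := mem_Msets hF H' hH'
  rcases hF.2 H hH H' hH' hne with h | h | ⟨hd, hfd⟩
  · exact Or.inl h
  · exact Or.inr (Or.inl h)
  · fin_cases h1 <;> fin_cases h2 <;>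
      first
        | exact absurd rfl hne
        | exact Or.inl (by decide)
        | exact Or.inr (Or.inl (by decide))
        | exact Or.inr (Or.inr (Or.inl ⟨by decide, by decide⟩))
        | exact Or.inr (Or.inr (Or.inr ⟨by decide, by decide⟩))
        | exact absurd hd (by decide)
        | exact absurd hfd not_fd_1_23
        | exact absurd hfd not_fd_23_1
        | exact absurd hfd not_fd_3_12
        | exact absurd hfd not_fd_12_3

set_option maxRecDepth 4000 in
lemma forest_in_L (F : Finset (Finset (Fin 6 × Fin 6))) (hsub : F ⊆ Msets)
    (hc : ∀ H ∈ F, ∀ H' ∈ F, H ≠ H' → Compat H H') : F ∈ Lforests := by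
  have hp : F ∈ Msets.powerset := Finset.mem_powerset.2 hsub
  clear hsub
  fin_cases hp <;>
    first
      | decide
      | exact absurd (hc A1 (by decide) A23 (by decide) (by decide)) (by decide)
      | exact absurd (hc A3 (by decide) A12 (by decide) (by decide)) (by decide)
      | exact absurd (hc A12 (by decide) A23 (by decide) (by decide)) (by decide)

set_option maxRecDepth 4000 in
lemma meloforest_iff (F : Finset (Finset (Fin 6 × Fin 6))) :
    IsMeloforest6 F ↔ F ∈ Lforests := by
  constructor
  · intro h; exact forest_in_L F (mem_Msets h) (compat_of h)
  · intro h
    fin_cases h <;>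
      refine meloforest_of _ (by decide) ?_ <;>
      intro H hH H' hH' hne <;>
      fin_cases hH <;> fin_cases hH' <;>
        first
          | exact absurd rfl hne
          | exact Or.inl (by decide)
          | exact Or.inr (Or.inl (by decide))
          | exact Or.inr (Or.inr (Or.inl ⟨by decide, by decide⟩))
          | exact Or.inr (Or.inr (Or.inr ⟨by decide, by decide⟩))

end Aux6
/-- **The φ⁶ example (appendix).**  The order-6 melonic bubble admits a unique closure
into a vacuum graph with a single vertex which is a (vacuum) melopole — so that every
meloforest of the bubble is a meloforest of that graph.  That graph has three lines
`l₁ = (0,1)`, `l₂ = (2,5)`, `l₃ = (4,3)` and exactly four nonempty strict melopoles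
`{l₁}, {l₃}, {l₁,l₂}, {l₂,l₃}`, while `{l₂}` and `{l₁,l₃}` are not melopoles;
consequently it has exactly 16 meloforests. -/
theorem phi6_example :
    (∃! σ : Equiv.Perm (Fin 3), IsMelopole (Gclosure σ) (linesOf σ)) ∧
    (∀ H : Finset (Fin 6 × Fin 6), H ⊆ linesOf σ₀ →
        ((H.Nonempty ∧ H ⊂ linesOf σ₀ ∧ IsMelopole (Gclosure σ₀) H) ↔
          (H = {((0 : Fin 6), (1 : Fin 6))} ∨ H = {((4 : Fin 6), (3 : Fin 6))} ∨
           H = {((0 : Fin 6), (1 : Fin 6)), ((2 : Fin 6), (5 : Fin 6))} ∨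
           H = {((2 : Fin 6), (5 : Fin 6)), ((4 : Fin 6), (3 : Fin 6))}))) ∧
    ¬ IsMelopole (Gclosure σ₀) {((2 : Fin 6), (5 : Fin 6))} ∧
    ¬ IsMelopole (Gclosure σ₀) {((0 : Fin 6), (1 : Fin 6)), ((4 : Fin 6), (3 : Fin 6))} ∧
    Nat.card {F : Finset (Finset (Fin 6 × Fin 6)) // IsMeloforest6 F} = 16 := by
  refine ⟨⟨σ₀, by show IsMelopole (Gclosure σ₀) (linesOf σ₀); rw [lines_eq]; exact mel_full, fun σ hσ => unique_closure σ hσ⟩,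
    ?_, not_mel_A2, not_mel_A13, ?_⟩
  · intro H hsub
    rw [lines_eq] at hsub
    constructor
    · rintro ⟨hne, hss, hmel⟩
      rcases subset_cases hsub with rfl | rfl | rfl | rfl | rfl | rfl | rfl | rfl
      · exact absurd hne (by simp)
      · exact Or.inl rfl
      · exact absurd hmel not_mel_A2
      · exact Or.inr (Or.inl rfl)
      · exact Or.inr (Or.inr (Or.inl rfl))
      · exact absurd hmel not_mel_A13
      · exact Or.inr (Or.inr (Or.inr rfl))
      · rw [lines_eq] at hss; exact absurd hss (ssubset_irrefl _)
    · rintro (rfl | rfl | rfl | rfl)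
      · exact ⟨⟨l1, by decide⟩, by rw [lines_eq]; decide, mel_A1⟩
      · exact ⟨⟨l3, by decide⟩, by rw [lines_eq]; decide, mel_A3⟩
      · exact ⟨⟨l1, by decide⟩, by rw [lines_eq]; decide, mel_A12⟩
      · exact ⟨⟨l2, by decide⟩, by rw [lines_eq]; decide, mel_A23⟩
  · rw [Nat.card_congr (Equiv.subtypeEquivRight meloforest_iff)]
    rw [Nat.card_eq_finsetCard]
    decide
end
end
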